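/- arXiv:2302.06943 — 5 statements merged into one kernel-verified Lean document; each statement's English description precedes it below -/
import Mathlib

section
/- Let n ≥ 1 and let X_1, ..., X_n be i.i.d. samples from a distribution on [0,1] with density π satisfying 0 < π̲ ≤ π ≤ π̄ almost surely. Let Δ_1, ..., Δ_{n+1} be the gaps between consecutive order statistics (with boundary convention X_(0) = 0, X_(n+1) = 1). Then for any γ > 0 with γ < 1/(4π̄), P(min_i Δ_i > γ/n²) ≥ e^{-4π̄γ}. -/
/-!
Union bound. With `t = γ / n²`, call a sample bad if it lies within `t` of `0` or `1`, or if two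
distinct samples lie within `t` of each other; outside these `n²` events every gap of the sorted
sample exceeds `t`. Since the density is at most `π̄`, a sample lies in an interval of length `ℓ`
with probability at most `π̄ ℓ`; by independence the same holds for the conditional law of `X j`
given `X i`. Each bad event therefore has probability at most `2 π̄ t`, the union at most
`2 π̄ γ`, and `1 - 2 π̄ γ ≥ e^{-4 π̄ γ}` because `4 π̄ γ ≤ 1`.
-/

open MeasureTheory ProbabilityTheory Set Metric

lemma exp_neg_le_one_sub_half {x : ℝ} (hx0 : 0 ≤ x) (hx1 : x ≤ 1) :
    Real.exp (-x) ≤ 1 - x / 2 := by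
  have hinv : Real.exp (-x) * (1 + x) ≤ 1 := by
    calc Real.exp (-x) * (1 + x) ≤ Real.exp (-x) * Real.exp x := by
          gcongr; linarith [Real.add_one_le_exp x]
      _ = 1 := by rw [← Real.exp_add, neg_add_cancel, Real.exp_zero]
  nlinarith [Real.exp_pos (-x)]

lemma one_sub_le_measure_compl {α : Type*} [MeasurableSpace α] (μ : Measure α)
    [IsProbabilityMeasure μ] (s : Set α) : 1 - μ s ≤ μ sᶜ := by
  rw [tsub_le_iff_right, ← measure_univ (μ := μ), ← compl_union_self s]
  exact measure_union_le _ _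

lemma measure_iUnion_le_card_mul {α ι : Type*} [MeasurableSpace α] [Fintype ι]
    (μ : Measure α) {s : ι → Set α} {ε : ENNReal} (hs : ∀ i, μ (s i) ≤ ε) :
    μ (⋃ i, s i) ≤ Fintype.card ι * ε := by
  calc μ (⋃ i, s i) ≤ ∑ i, μ (s i) := measure_iUnion_fintype_le μ s
    _ ≤ Fintype.card ι • ε := Finset.sum_le_card_nsmul _ _ _ fun i _ => hs i
    _ = Fintype.card ι * ε := nsmul_eq_mul _ _

lemma withDensity_ofReal_le_smul {α : Type*} [MeasurableSpace α] {ν : Measure α} {f : α → ℝ}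
    {c : ℝ} (hf : ∀ᵐ x ∂ν, f x ≤ c) :
    ν.withDensity (fun x => ENNReal.ofReal (f x)) ≤ ENNReal.ofReal c • ν := by
  rw [← withDensity_const]
  exact withDensity_mono (hf.mono fun x hx => ENNReal.ofReal_le_ofReal hx)

section DensityBound

variable {μ : Measure ℝ} {s : Set ℝ} {c : ℝ}

lemma measure_le_of_inter_subset_Icc (hc : 0 ≤ c) (hs : MeasurableSet s)
    (hμ : μ ≤ ENNReal.ofReal c • volume.restrict s) {A : Set ℝ} {a b : ℝ}
    (hA : A ∩ s ⊆ Icc a b) : μ A ≤ ENNReal.ofReal (c * (b - a)) := by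
  calc μ A ≤ ENNReal.ofReal c * volume (A ∩ s) := by
        simpa [Measure.restrict_apply' hs] using hμ A
    _ ≤ ENNReal.ofReal c * volume (Icc a b) := by gcongr
    _ = ENNReal.ofReal (c * (b - a)) := by rw [Real.volume_Icc, ENNReal.ofReal_mul hc]

lemma measure_closedBall_le_of_le_smul (hc : 0 ≤ c) (hs : MeasurableSet s)
    (hμ : μ ≤ ENNReal.ofReal c • volume.restrict s) (x r : ℝ) :
    μ (closedBall x r) ≤ ENNReal.ofReal (2 * c * r) := by
  have h := measure_le_of_inter_subset_Icc hc hs hμ (A := closedBall x r) (a := x - r)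
    (b := x + r) (by rw [Real.closedBall_eq_Icc]; exact inter_subset_left)
  convert h using 2
  ring

lemma measure_near_endpoints_le_of_le_smul (hc : 0 ≤ c)
    (hμ : μ ≤ ENNReal.ofReal c • volume.restrict (Icc 0 1)) {t : ℝ} (ht : 0 ≤ t) :
    μ (Iic t ∪ Ici (1 - t)) ≤ ENNReal.ofReal (2 * c * t) := by
  have hleft := measure_le_of_inter_subset_Icc hc measurableSet_Icc hμ (A := Iic t) (a := 0)
    (b := t) fun x hx => ⟨hx.2.1, hx.1⟩
  have hright := measure_le_of_inter_subset_Icc hc measurableSet_Icc hμ (A := Ici (1 - t))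
    (a := 1 - t) (b := 1) fun x hx => ⟨hx.1, hx.2.2⟩
  calc μ (Iic t ∪ Ici (1 - t)) ≤ μ (Iic t) + μ (Ici (1 - t)) := measure_union_le _ _
    _ ≤ ENNReal.ofReal (c * (t - 0)) + ENNReal.ofReal (c * (1 - (1 - t))) :=
        add_le_add hleft hright
    _ = ENNReal.ofReal (2 * c * t) := by
        rw [← ENNReal.ofReal_add (by nlinarith) (by nlinarith)]
        ring_nf

end DensityBound

lemma ProbabilityTheory.IndepFun.measure_preimage_le_of_sections_le {Ω α β : Type*}
    [MeasurableSpace Ω] [MeasurableSpace α] [MeasurableSpace β]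
    {P : Measure Ω} [IsProbabilityMeasure P]
    {X : Ω → α} {Y : Ω → β} (hXY : IndepFun X Y P) (hX : Measurable X) (hY : Measurable Y)
    {S : Set (α × β)} (hS : MeasurableSet S) {ε : ENNReal}
    (hε : ∀ x, P.map Y (Prod.mk x ⁻¹' S) ≤ ε) :
    P ((fun ω => (X ω, Y ω)) ⁻¹' S) ≤ ε := by
  have hprod := (indepFun_iff_map_prod_eq_prod_map_map hX.aemeasurable hY.aemeasurable).mp hXY
  have : IsProbabilityMeasure (P.map X) := Measure.isProbabilityMeasure_map hX.aemeasurable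
  rw [← Measure.map_apply (hX.prodMk hY) hS, hprod, Measure.prod_apply hS]
  calc ∫⁻ x, P.map Y (Prod.mk x ⁻¹' S) ∂P.map X ≤ ∫⁻ _, ε ∂P.map X := lintegral_mono hε
    _ = ε := by simp

lemma ProbabilityTheory.IndepFun.measure_dist_le_le {Ω : Type*} [MeasurableSpace Ω]
    {P : Measure Ω} [IsProbabilityMeasure P] {X Y : Ω → ℝ} (hXY : IndepFun X Y P)
    (hX : Measurable X) (hY : Measurable Y) (r : ℝ) {ε : ENNReal}
    (hε : ∀ x, P.map Y (closedBall x r) ≤ ε) :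
    P {ω | dist (Y ω) (X ω) ≤ r} ≤ ε :=
  hXY.measure_preimage_le_of_sections_le hX hY (S := {p | dist p.2 p.1 ≤ r})
    (measurableSet_le (measurable_snd.dist measurable_fst) measurable_const) hε

lemma gap_gt_of_separated {n : ℕ} (hn : 1 ≤ n) {x : Fin n → ℝ} {y : ℕ → ℝ} {t : ℝ}
    (hy0 : y 0 = 0) (hytop : y (n + 1) = 1)
    (hsort : ∀ i j, 1 ≤ i → i ≤ j → j ≤ n → y i ≤ y j)
    (σ : Equiv.Perm (Fin n)) (hσ : ∀ i : Fin n, y (i.1 + 1) = x (σ i))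
    (hinner : ∀ i, t < x i ∧ x i < 1 - t) (hsep : ∀ i j, i ≠ j → t < dist (x j) (x i))
    {i : ℕ} (hi1 : 1 ≤ i) (hin : i ≤ n + 1) : y i - y (i - 1) > t := by
  obtain ⟨k, rfl⟩ : ∃ k, i = k + 1 := ⟨i - 1, by omega⟩
  rw [Nat.add_sub_cancel]
  rcases Nat.lt_or_ge k n with hk | hk
  · rw [hσ ⟨k, hk⟩]
    rcases k with _ | j
    · rw [hy0, sub_zero]
      exact (hinner _).1
    · have hne : σ ⟨j, by omega⟩ ≠ σ ⟨j + 1, hk⟩ := σ.injective.ne (by simp)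
      have hmono := hsort (j + 1) (j + 1 + 1) le_add_self (by omega) hk
      rw [hσ ⟨j + 1, hk⟩] at hmono
      rw [hσ ⟨j, by omega⟩] at hmono ⊢
      have hdist := hsep _ _ hne
      rwa [Real.dist_eq, abs_of_nonneg (sub_nonneg.mpr hmono)] at hdist
  · obtain rfl : k = n := by omega
    obtain ⟨m, rfl⟩ : ∃ m, k = m + 1 := ⟨k - 1, by omega⟩
    rw [hytop, hσ ⟨m, by omega⟩]
    linarith [(hinner (σ ⟨m, by omega⟩)).2]

section Collision

variable {Ω : Type*} {n : ℕ}

/-- Diagonal indices carry the boundary events, so that all `n²` bad events share one index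
type. -/
def collisionEvent (X : Fin n → Ω → ℝ) (t : ℝ) (p : Fin n × Fin n) : Set Ω :=
  if p.1 = p.2 then X p.1 ⁻¹' (Iic t ∪ Ici (1 - t)) else {ω | dist (X p.2 ω) (X p.1 ω) ≤ t}

lemma measure_collisionEvent_le [MeasurableSpace Ω] {P : Measure Ω} [IsProbabilityMeasure P]
    {X : Fin n → Ω → ℝ} (hX : ∀ i, Measurable (X i)) (hindep : iIndepFun X P) {c t : ℝ}
    (hc : 0 ≤ c) (ht : 0 ≤ t)
    (hlaw : ∀ i, P.map (X i) ≤ ENNReal.ofReal c • volume.restrict (Icc 0 1))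
    (p : Fin n × Fin n) :
    P (collisionEvent X t p) ≤ ENNReal.ofReal (2 * c * t) := by
  obtain ⟨i, j⟩ := p
  by_cases hij : i = j
  · simp only [collisionEvent, if_pos hij]
    rw [← Measure.map_apply (hX i) (measurableSet_Iic.union measurableSet_Ici)]
    exact measure_near_endpoints_le_of_le_smul hc (hlaw i) ht
  · simp only [collisionEvent, if_neg hij]
    exact (hindep.indepFun hij).measure_dist_le_le (hX i) (hX j) t
      (measure_closedBall_le_of_le_smul hc measurableSet_Icc (hlaw j) · t)

lemma gap_gt_of_notMem_collisionEvent (hn : 1 ≤ n) {X : Fin n → Ω → ℝ} {Y : ℕ → ℝ} {t : ℝ}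
    {ω : Ω} (hω : ω ∉ ⋃ p, collisionEvent X t p) (hY0 : Y 0 = 0) (hYtop : Y (n + 1) = 1)
    (hsort : ∀ i j, 1 ≤ i → i ≤ j → j ≤ n → Y i ≤ Y j)
    (σ : Equiv.Perm (Fin n)) (hσ : ∀ i : Fin n, Y (i.1 + 1) = X (σ i) ω)
    {i : ℕ} (hi1 : 1 ≤ i) (hin : i ≤ n + 1) : Y i - Y (i - 1) > t := by
  simp only [mem_iUnion, not_exists] at hω
  refine gap_gt_of_separated hn (x := fun k => X k ω) hY0 hYtop hsort σ hσ (fun k => ?_)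
    (fun k l hkl => ?_) hi1 hin
  · simpa [collisionEvent, lt_sub_iff_add_lt] using hω (k, k)
  · simpa [collisionEvent, hkl] using hω (k, l)

end Collision

theorem stmt_4_general {Ω : Type*} [MeasurableSpace Ω] (P : Measure Ω) [IsProbabilityMeasure P]
    (n : ℕ) (hn : 1 ≤ n)
    (pdf : ℝ → ℝ) (piLow piHigh : ℝ)
    (hbound : ∀ᵐ x ∂(volume.restrict (Set.Icc (0:ℝ) 1)),
      piLow ≤ pdf x ∧ pdf x ≤ piHigh)
    (X : Fin n → Ω → ℝ) (hX : ∀ i, Measurable (X i))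
    (hindep : iIndepFun X P)
    (hlaw : ∀ i, Measure.map (X i) P =
      (volume.restrict (Set.Icc (0:ℝ) 1)).withDensity (fun x => ENNReal.ofReal (pdf x)))
    (Y : ℕ → Ω → ℝ)
    (hY0 : ∀ ω, Y 0 ω = 0)
    (hYtop : ∀ ω, Y (n + 1) ω = 1)
    (hsort : ∀ ω, ∀ i j, 1 ≤ i → i ≤ j → j ≤ n → Y i ω ≤ Y j ω)
    (hperm : ∀ ω, ∃ σ : Equiv.Perm (Fin n), ∀ i : Fin n, Y (i.1 + 1) ω = X (σ i) ω)
    (γ : ℝ) (hγ0 : 0 < γ) (hγ1 : γ < 1 / (4 * piHigh)) :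
    P {ω | ∀ i, 1 ≤ i → i ≤ n + 1 → Y i ω - Y (i - 1) ω > γ / n ^ 2} ≥
      ENNReal.ofReal (Real.exp (-(4 * piHigh * γ))) := by
  have hc : 0 < piHigh := by
    by_contra! h
    linarith [div_nonpos_of_nonneg_of_nonpos zero_le_one (by linarith : 4 * piHigh ≤ 0)]
  have hγc : 4 * piHigh * γ ≤ 1 := by
    rw [lt_div_iff₀ (by positivity)] at hγ1
    linarith
  have hlaw_le : ∀ i, P.map (X i) ≤ ENNReal.ofReal piHigh • volume.restrict (Icc 0 1) :=
    fun i => hlaw i ▸ withDensity_ofReal_le_smul (hbound.mono fun x hx => hx.2)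
  set bad := ⋃ p, collisionEvent X (γ / n ^ 2) p
  have hbad : P bad ≤ ENNReal.ofReal (2 * piHigh * γ) := by
    refine (measure_iUnion_le_card_mul P (measure_collisionEvent_le hX hindep hc.le
      (by positivity) hlaw_le)).trans_eq ?_
    rw [Fintype.card_prod, Fintype.card_fin, ← ENNReal.ofReal_natCast,
      ← ENNReal.ofReal_mul (by positivity)]
    congr 1
    field_simp
    push_cast
    ring
  have hgood : badᶜ ⊆ {ω | ∀ i, 1 ≤ i → i ≤ n + 1 → Y i ω - Y (i - 1) ω > γ / n ^ 2} := by
    intro ω hω i hi1 hin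
    obtain ⟨σ, hσ⟩ := hperm ω
    exact gap_gt_of_notMem_collisionEvent hn hω (hY0 ω) (hYtop ω) (hsort ω) σ hσ hi1 hin
  calc ENNReal.ofReal (Real.exp (-(4 * piHigh * γ)))
      ≤ ENNReal.ofReal (1 - 2 * piHigh * γ) := by
        gcongr
        linarith [exp_neg_le_one_sub_half (by positivity) hγc]
    _ = 1 - ENNReal.ofReal (2 * piHigh * γ) := by
        rw [ENNReal.ofReal_sub 1 (by positivity), ENNReal.ofReal_one]
    _ ≤ 1 - P bad := tsub_le_tsub_left hbad 1
    _ ≤ P badᶜ := one_sub_le_measure_compl P bad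
    _ ≤ _ := measure_mono hgood

/-- For `n ≥ 1` i.i.d. samples from a density `π` on `[0,1]` with
`0 < π̲ ≤ π ≤ π̄` a.e., the probability that all gaps between consecutive order
statistics (with boundary conventions `Y 0 = 0`, `Y (n+1) = 1`) exceed `γ/n²`
is at least `e^{-4π̄γ}`, for any `0 < γ < 1/(4π̄)`. -/
theorem stmt_4 {Ω : Type*} [MeasurableSpace Ω] (P : Measure Ω) [IsProbabilityMeasure P]
    (n : ℕ) (hn : 1 ≤ n)
    (pdf : ℝ → ℝ) (piLow piHigh : ℝ) (hlow : 0 < piLow)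
    (hbound : ∀ᵐ x ∂(volume.restrict (Set.Icc (0:ℝ) 1)),
      piLow ≤ pdf x ∧ pdf x ≤ piHigh)
    (X : Fin n → Ω → ℝ) (hX : ∀ i, Measurable (X i))
    (hindep : iIndepFun X P)
    (hlaw : ∀ i, Measure.map (X i) P =
      (volume.restrict (Set.Icc (0:ℝ) 1)).withDensity (fun x => ENNReal.ofReal (pdf x)))
    (Y : ℕ → Ω → ℝ)
    (hY0 : ∀ ω, Y 0 ω = 0)
    (hYtop : ∀ ω, Y (n + 1) ω = 1)
    (hsort : ∀ ω, ∀ i j, 1 ≤ i → i ≤ j → j ≤ n → Y i ω ≤ Y j ω)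
    (hperm : ∀ ω, ∃ σ : Equiv.Perm (Fin n), ∀ i : Fin n, Y (i.1 + 1) ω = X (σ i) ω)
    (γ : ℝ) (hγ0 : 0 < γ) (hγ1 : γ < 1 / (4 * piHigh)) :
    P {ω | ∀ i, 1 ≤ i → i ≤ n + 1 → Y i ω - Y (i - 1) ω > γ / n ^ 2} ≥
      ENNReal.ofReal (Real.exp (-(4 * piHigh * γ))) :=
  stmt_4_general P n hn pdf piLow piHigh hbound X hX hindep hlaw Y hY0 hYtop hsort hperm γ hγ0 hγ1
end

section
/- Let π be a probability density on [0,1] bounded below by π̲ > 0 almost everywhere, with quantile function F_π^{-1}. Let π̂ be an integrable function on [0,1] with ‖π̂ - π‖_∞ ≤ α, and define its generalized quantile function F_{π̂}^{-1}(p) = inf{q ∈ [0,1] : ∫_0^q π̂ ≥ p} (with inf ∅ = 1). If p ∈ [0,1] is such that the interval [F_π^{-1}(p) - 2α/π̲, F_π^{-1}(p) + α/π̲] is contained in (0,1), then |F_π^{-1}(p) - F_{π̂}^{-1}(p)| ≤ 2α/π̲. -/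
open MeasureTheory

/-- Inversion of density estimators: if `π̂` is within `α` of the density `π`
(in sup norm) and `π ≥ π̲ > 0`, then for `p` such that
`[F_π⁻¹(p) - 2α/π̲, F_π⁻¹(p) + α/π̲] ⊆ (0,1)`, the generalized quantile
function of `π̂` is within `2α/π̲` of `F_π⁻¹(p)`. -/
theorem stmt_5 (pdf : ℝ → ℝ) (piLow : ℝ) (hlow : 0 < piLow)
    (hbound : ∀ᵐ x ∂(volume.restrict (Set.Icc (0:ℝ) 1)), piLow ≤ pdf x)
    (hint : ∫ x in (0:ℝ)..1, pdf x = 1)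
    (pdfHat : ℝ → ℝ) (hinteg : IntegrableOn pdfHat (Set.Icc (0:ℝ) 1))
    (α : ℝ) (hα : 0 ≤ α)
    (hclose : ∀ᵐ x ∂(volume.restrict (Set.Icc (0:ℝ) 1)), |pdfHat x - pdf x| ≤ α)
    (F Finv FinvHat : ℝ → ℝ)
    (hF : ∀ t, F t = ∫ x in (0:ℝ)..t, pdf x)
    (hFinv : ∀ p, Finv p = sInf {t : ℝ | p ≤ F t})
    (hFinvHat : ∀ p, FinvHat p =
      sInf (insert 1 {q ∈ Set.Icc (0:ℝ) 1 | p ≤ ∫ x in (0:ℝ)..q, pdfHat x}))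
    (p : ℝ) (hp : p ∈ Set.Icc (0:ℝ) 1)
    (hin : Set.Icc (Finv p - 2 * α / piLow) (Finv p + α / piLow) ⊆ Set.Ioo (0:ℝ) 1) :
    |Finv p - FinvHat p| ≤ 2 * α / piLow := by
  have hδnn : (0:ℝ) ≤ 2 * α / piLow := by positivity
  have hδnn' : (0:ℝ) ≤ α / piLow := by positivity
  have hx0 : Finv p ∈ Set.Ioo (0:ℝ) 1 := hin ⟨by linarith, by linarith⟩
  have haI : Finv p - 2 * α / piLow ∈ Set.Ioo (0:ℝ) 1 := hin ⟨le_refl _, by linarith⟩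
  have hq1I : Finv p + α / piLow ∈ Set.Ioo (0:ℝ) 1 := hin ⟨by linarith, le_refl _⟩
  have h0I : (0:ℝ) ∈ Set.Icc (0:ℝ) 1 := ⟨le_refl 0, zero_le_one⟩
  -- pdf is interval integrable on [0,1]
  have hpdfI : IntervalIntegrable pdf volume 0 1 := by
    by_contra h
    rw [intervalIntegral.integral_undef h] at hint
    norm_num at hint
  have hpdfII : ∀ s t : ℝ, s ∈ Set.Icc (0:ℝ) 1 → t ∈ Set.Icc (0:ℝ) 1 →
      IntervalIntegrable pdf volume s t := by
    intro s t hs ht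
    exact hpdfI.mono_set (Set.uIcc_subset_uIcc
      (by rwa [Set.uIcc_of_le (zero_le_one (α := ℝ))])
      (by rwa [Set.uIcc_of_le (zero_le_one (α := ℝ))]))
  have hHatII : ∀ s t : ℝ, s ∈ Set.Icc (0:ℝ) 1 → t ∈ Set.Icc (0:ℝ) 1 →
      IntervalIntegrable pdfHat volume s t := by
    intro s t hs ht
    have hsub : Set.uIcc s t ⊆ Set.Icc (0:ℝ) 1 := by
      rw [← Set.uIcc_of_le (zero_le_one (α := ℝ))]
      exact Set.uIcc_subset_uIcc (by rwa [Set.uIcc_of_le (zero_le_one (α := ℝ))])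
        (by rwa [Set.uIcc_of_le (zero_le_one (α := ℝ))])
    exact (hinteg.mono_set hsub).intervalIntegrable
  -- strict growth of F
  have hFmono : ∀ s t : ℝ, 0 ≤ s → s ≤ t → t ≤ 1 → F s + piLow * (t - s) ≤ F t := by
    intro s t hs hst ht
    have hsI : s ∈ Set.Icc (0:ℝ) 1 := ⟨hs, hst.trans ht⟩
    have htI : t ∈ Set.Icc (0:ℝ) 1 := ⟨hs.trans hst, ht⟩
    have hdiff : F t - F s = ∫ x in s..t, pdf x := by
      rw [hF t, hF s]
      exact intervalIntegral.integral_interval_sub_left (hpdfII 0 t h0I htI)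
        (hpdfII 0 s h0I hsI)
    have hae : (fun _ : ℝ => piLow) ≤ᵐ[volume.restrict (Set.Icc s t)] pdf := by
      have h1 := ae_restrict_of_ae_restrict_of_subset
        (Set.Icc_subset_Icc hs ht) hbound
      filter_upwards [h1] with x hx using hx
    have hmono := intervalIntegral.integral_mono_ae_restrict hst
      (intervalIntegrable_const) (hpdfII s t hsI htI) hae
    rw [intervalIntegral.integral_const, smul_eq_mul] at hmono
    nlinarith [hmono]
  -- closeness of the two primitives
  have hG : ∀ q : ℝ, q ∈ Set.Icc (0:ℝ) 1 →
      |(∫ x in (0:ℝ)..q, pdfHat x) - F q| ≤ α := by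
    intro q hq
    rw [hF q]
    have hHat := hHatII 0 q h0I hq
    have hPdf := hpdfII 0 q h0I hq
    rw [← intervalIntegral.integral_sub hHat hPdf]
    have h1 : |∫ x in (0:ℝ)..q, (pdfHat x - pdf x)| ≤
        ∫ x in (0:ℝ)..q, |pdfHat x - pdf x| :=
      intervalIntegral.abs_integral_le_integral_abs hq.1
    have h2 : (∫ x in (0:ℝ)..q, |pdfHat x - pdf x|) ≤ ∫ _x in (0:ℝ)..q, α := by
      apply intervalIntegral.integral_mono_ae_restrict hq.1 ((hHat.sub hPdf).abs)
        intervalIntegrable_const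
      have h3 := ae_restrict_of_ae_restrict_of_subset
        (Set.Icc_subset_Icc (le_refl 0) hq.2) hclose
      filter_upwards [h3] with x hx using hx
    have h3 : (∫ _x in (0:ℝ)..q, α) = q * α := by
      rw [intervalIntegral.integral_const, smul_eq_mul]; ring
    nlinarith [hq.2, hα]
  -- continuity of F on [0,1]
  have hFcont : ContinuousOn F (Set.Icc (0:ℝ) 1) := by
    have hFeq : F = fun x => ∫ t in (0:ℝ)..x, pdf t := funext hF
    rw [hFeq]
    have h := intervalIntegral.continuousOn_primitive_interval'
      (μ := volume) (b₁ := (0:ℝ)) (b₂ := 1) hpdfI Set.left_mem_uIcc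
    rwa [Set.uIcc_of_le zero_le_one] at h
  -- the set defining Finv p
  have hSbdd : BddBelow {t : ℝ | p ≤ F t} := by
    by_contra h
    have h0 := hx0.1
    rw [hFinv p, Real.sInf_of_not_bddBelow h] at h0
    exact lt_irrefl _ h0
  have hSne : {t : ℝ | p ≤ F t}.Nonempty := by
    by_contra h
    rw [Set.not_nonempty_iff_eq_empty] at h
    have h0 := hx0.1
    rw [hFinv p, h, Real.sInf_empty] at h0
    exact lt_irrefl _ h0
  have hA : ∀ t, t < Finv p → F t < p := by
    intro t ht
    by_contra h
    push_neg at h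
    have h1 : Finv p ≤ t := by
      rw [hFinv p]; exact csInf_le hSbdd h
    linarith
  have hx0I : Finv p ∈ Set.Icc (0:ℝ) 1 := ⟨le_of_lt hx0.1, le_of_lt hx0.2⟩
  have hB : p ≤ F (Finv p) := by
    apply le_of_forall_pos_le_add
    intro ε hε
    obtain ⟨d, hd, hdp⟩ := Metric.continuousWithinAt_iff.mp (hFcont (Finv p) hx0I) ε hε
    have hηpos : 0 < min d (1 - Finv p) := lt_min hd (by linarith [hx0.2])
    obtain ⟨b, hbS, hb⟩ := Real.lt_sInf_add_pos hSne hηpos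
    rw [← hFinv p] at hb
    have hb0 : Finv p ≤ b := by
      rw [hFinv p]; exact csInf_le hSbdd hbS
    have hmin1 : min d (1 - Finv p) ≤ d := min_le_left _ _
    have hmin2 : min d (1 - Finv p) ≤ 1 - Finv p := min_le_right _ _
    have hb1 : b ≤ 1 := by linarith
    have hdist : dist b (Finv p) < d := by
      rw [Real.dist_eq, abs_of_nonneg (by linarith)]
      linarith
    have h1 := hdp ⟨by linarith [hx0.1], hb1⟩ hdist
    rw [Real.dist_eq] at h1
    have h2 := abs_lt.mp h1
    have hpb : p ≤ F b := hbS
    linarith [h2.1]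
  have hC : F (Finv p) ≤ p := by
    apply le_of_forall_pos_le_add
    intro ε hε
    obtain ⟨d, hd, hdp⟩ := Metric.continuousWithinAt_iff.mp (hFcont (Finv p) hx0I) ε hε
    set t := Finv p - min (d / 2) (Finv p / 2) with htdef
    have hm1 : min (d / 2) (Finv p / 2) ≤ d / 2 := min_le_left _ _
    have hm2 : min (d / 2) (Finv p / 2) ≤ Finv p / 2 := min_le_right _ _
    have hmpos : 0 < min (d / 2) (Finv p / 2) := lt_min (by linarith) (by linarith [hx0.1])
    have ht1 : t < Finv p := by rw [htdef]; linarith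
    have htmem : t ∈ Set.Icc (0:ℝ) 1 := ⟨by rw [htdef]; linarith [hx0.1],
      by rw [htdef]; linarith [hx0.2]⟩
    have hdist : dist t (Finv p) < d := by
      rw [Real.dist_eq, abs_of_nonpos (by rw [htdef]; linarith)]
      rw [htdef]; linarith
    have h1 := hdp htmem hdist
    rw [Real.dist_eq] at h1
    have h2 := abs_lt.mp h1
    have h3 := hA t ht1
    linarith [h2.2]
  have hFx0 : F (Finv p) = p := le_antisymm hC hB
  -- analysis of the set defining FinvHat p
  have hpl2 : piLow * (2 * α / piLow) = 2 * α := by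
    field_simp
  have hpl1 : piLow * (α / piLow) = α := by
    field_simp
  have hlb : ∀ y ∈ insert (1:ℝ)
      {q ∈ Set.Icc (0:ℝ) 1 | p ≤ ∫ x in (0:ℝ)..q, pdfHat x},
      Finv p - 2 * α / piLow ≤ y := by
    intro y hy
    rcases Set.mem_insert_iff.mp hy with rfl | hyT
    · linarith [haI.2]
    · obtain ⟨hyIcc, hpy⟩ := hyT
      by_contra hya
      push_neg at hya
      have h1 := hFmono y (Finv p - 2 * α / piLow) hyIcc.1 (le_of_lt hya) (le_of_lt haI.2)
      have h2 := hFmono (Finv p - 2 * α / piLow) (Finv p) (le_of_lt haI.1)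
        (by linarith) (le_of_lt hx0.2)
      have habs := abs_le.mp (hG y hyIcc)
      rw [show Finv p - (Finv p - 2 * α / piLow) = 2 * α / piLow by ring, hpl2, hFx0] at h2
      have hpos : 0 < piLow * ((Finv p - 2 * α / piLow) - y) :=
        mul_pos hlow (by linarith)
      linarith [habs.2]
  have hmemq1 : (Finv p + α / piLow) ∈ insert (1:ℝ)
      {q ∈ Set.Icc (0:ℝ) 1 | p ≤ ∫ x in (0:ℝ)..q, pdfHat x} := by
    apply Set.mem_insert_of_mem
    have hq1Icc : Finv p + α / piLow ∈ Set.Icc (0:ℝ) 1 :=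
      ⟨le_of_lt hq1I.1, le_of_lt hq1I.2⟩
    refine ⟨hq1Icc, ?_⟩
    have h2 := hFmono (Finv p) (Finv p + α / piLow) (le_of_lt hx0.1)
      (by linarith) (le_of_lt hq1I.2)
    have habs := abs_le.mp (hG _ hq1Icc)
    rw [hFx0] at h2
    have h3 : piLow * (Finv p + α / piLow - Finv p) = α := by
      rw [show Finv p + α / piLow - Finv p = α / piLow by ring, hpl1]
    rw [h3] at h2
    linarith [habs.1]
  have hlowb : Finv p - 2 * α / piLow ≤ FinvHat p := by
    rw [hFinvHat p]
    exact le_csInf ⟨1, Set.mem_insert 1 _⟩ hlb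
  have hupb : FinvHat p ≤ Finv p + α / piLow := by
    rw [hFinvHat p]
    exact csInf_le ⟨Finv p - 2 * α / piLow, hlb⟩ hmemq1
  have h2α : α / piLow ≤ 2 * α / piLow := by
    rw [show 2 * α / piLow = 2 * (α / piLow) by ring]
    linarith
  rw [abs_le]
  constructor <;> linarith
end

section
/- Let X_1, ..., X_n be i.i.d. samples from a distribution on [0,1] with an L-Lipschitz density π. Let π̂^hist be the ε-DP private histogram estimator with bin size h (where 1/h ∈ ℕ): on each bin b, π̂^hist equals (1/(nh))(Σ_{i=1}^n 1_b(X_i) + (2/ε)L_b), with L_b independent standard Laplace noise. Then for any γ > Lh, P(‖π̂^hist - π‖_∞ > γ) ≤ (1/h)·exp(-γhnε/4) + (2/h)·exp(-h²(γ - Lh)²n/4). -/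
/-! On the bin `k` containing `t`, with bin count `S` and bin mass `p = ∫_{bin} π`, the error is
`(S - n p) / (n h) + 2 Λ_k / (ε n h) + (p - h π(t)) / h`. The last term is at most `L h / 2` since
`π` is `L`-Lipschitz, so an error above `γ` forces, in some bin, either a Laplace variable with
`|Λ_k| > γ h n ε / 4` (probability `exp (-γ h n ε / 4)`) or a count with
`|S - n p| ≥ n (γ - L h) h / 2` (probability at most `2 exp (-n h² (γ - L h)² / 2)` by Hoeffding).
A union bound over the `1 / h` bins concludes. -/

open scoped Classical NNReal

open MeasureTheory ProbabilityTheory Real Finset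

lemma measureReal_le_abs_sum_sub_integral_le {Ω ι : Type*} [MeasurableSpace Ω] {μ : Measure Ω}
    [IsProbabilityMeasure μ] {X : ι → Ω → ℝ} (hind : iIndepFun X μ) (hX : ∀ i, Measurable (X i))
    {a b : ℝ} (hab : ∀ i ω, X i ω ∈ Set.Icc a b) (s : Finset ι) {ε : ℝ} (hε : 0 ≤ ε) :
    μ.real {ω | ε ≤ |∑ i ∈ s, (X i ω - μ[X i])|} ≤
      2 * exp (-2 * ε ^ 2 / (#s * (b - a) ^ 2)) := by
  set Z : ι → Ω → ℝ := fun i ω => X i ω - μ[X i]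
  have hZind : iIndepFun Z μ := hind.comp _ fun i => measurable_id.sub_const _
  have hZ : ∀ i, HasSubgaussianMGF (Z i) ((‖b - a‖₊ / 2) ^ 2) μ := fun i =>
    hasSubgaussianMGF_of_mem_Icc (hX i).aemeasurable (ae_of_all _ (hab i))
  have hvar : -ε ^ 2 / (2 * ((∑ _i ∈ s, (‖b - a‖₊ / 2) ^ 2 : ℝ≥0) : ℝ)) =
      -2 * ε ^ 2 / (#s * (b - a) ^ 2) := by
    push_cast
    rw [sum_const, nsmul_eq_mul, Real.norm_eq_abs, div_pow, sq_abs,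
      show 2 * (#s * ((b - a) ^ 2 / 2 ^ 2)) = #s * (b - a) ^ 2 / 2 by ring, div_div_eq_mul_div]
    ring
  have upper := HasSubgaussianMGF.measure_sum_ge_le_of_iIndepFun hZind (s := s) (fun i _ => hZ i) hε
  have lower := HasSubgaussianMGF.measure_sum_ge_le_of_iIndepFun
    (hZind.comp (fun _ x => -x) fun _ => measurable_neg) (s := s) (fun i _ => (hZ i).neg) hε
  rw [hvar] at upper lower
  simp only [Function.comp_apply] at lower
  calc μ.real {ω | ε ≤ |∑ i ∈ s, Z i ω|}
      ≤ μ.real ({ω | ε ≤ ∑ i ∈ s, Z i ω} ∪ {ω | ε ≤ ∑ i ∈ s, -Z i ω}) := by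
        refine measureReal_mono fun ω hω => ?_
        simpa [le_abs] using hω
    _ ≤ _ := (measureReal_union_le _ _).trans (by linarith)

lemma measureReal_le_abs_count_sub_le {Ω β : Type*} [MeasurableSpace Ω] [MeasurableSpace β]
    {P : Measure Ω} [IsProbabilityMeasure P] {n : ℕ} {X : Fin n → Ω → β} (hind : iIndepFun X P)
    (hX : ∀ i, Measurable (X i)) {ν : Measure β} (hlaw : ∀ i, P.map (X i) = ν) {S : Set β}
    (hS : MeasurableSet S) {u : ℝ} (hu : 0 ≤ u) :
    P.real {ω | n * u ≤ |(∑ i, if X i ω ∈ S then (1 : ℝ) else 0) - n * ν.real S|} ≤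
      2 * exp (-2 * n * u ^ 2) := by
  set Y : Fin n → Ω → ℝ := fun i ω => if X i ω ∈ S then 1 else 0
  have hYmeas : ∀ i, Measurable (Y i) := fun i =>
    Measurable.ite (hX i hS) measurable_const measurable_const
  have hYind : iIndepFun Y P :=
    hind.comp (fun _ x => if x ∈ S then (1 : ℝ) else 0)
      fun _ => Measurable.ite hS measurable_const measurable_const
  have hY01 : ∀ i ω, Y i ω ∈ Set.Icc (0 : ℝ) 1 := fun i ω => by
    by_cases h : X i ω ∈ S <;> simp [Y, h]
  have hmean : ∀ i, P[Y i] = ν.real S := fun i => by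
    rw [← hlaw i, map_measureReal_apply (hX i) hS, ← integral_indicator_one ((hX i) hS)]
    rfl
  have key := measureReal_le_abs_sum_sub_integral_le hYind hYmeas hY01 univ
    (mul_nonneg n.cast_nonneg hu)
  simp only [hmean, sum_sub_distrib, sum_const, card_univ, Fintype.card_fin, nsmul_eq_mul,
    sub_zero, one_pow, mul_one] at key
  convert key using 3
  rcases eq_or_ne (n : ℝ) 0 with hn | hn
  · simp [hn]
  · field_simp

noncomputable abbrev laplaceMeasure : Measure ℝ :=
  volume.withDensity fun t => ENNReal.ofReal ((1/2) * Real.exp (-|t|))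

lemma laplaceMeasure_real_setOf_lt_abs {a : ℝ} (ha : 0 ≤ a) :
    laplaceMeasure.real {x | a < |x|} = exp (-a) := by
  have hIoi : ∫⁻ x in Set.Ioi a, ENNReal.ofReal (1 / 2 * exp (-|x|)) =
      ENNReal.ofReal (1 / 2 * exp (-a)) := by
    rw [setLIntegral_congr_fun measurableSet_Ioi fun x (hx : a < x) => by
      rw [abs_of_pos (ha.trans_lt hx)], ← ofReal_integral_eq_lintegral_ofReal
      (by simpa using (exp_neg_integrableOn_Ioi a one_pos).const_mul (1 / 2 : ℝ))
      (ae_of_all _ fun x => by positivity), integral_const_mul, integral_exp_neg_Ioi]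
  have hIio : ∫⁻ x in Set.Iio (-a), ENNReal.ofReal (1 / 2 * exp (-|x|)) =
      ENNReal.ofReal (1 / 2 * exp (-a)) := by
    rw [setLIntegral_congr_fun measurableSet_Iio fun x (hx : x < -a) => by
      rw [abs_of_neg (hx.trans_le (neg_nonpos.mpr ha)), neg_neg], restrict_Iio_eq_restrict_Iic,
      ← ofReal_integral_eq_lintegral_ofReal ((integrableOn_exp_Iic _).const_mul _)
      (ae_of_all _ fun x => by positivity), integral_const_mul, integral_exp_Iic]
  have hset : {x : ℝ | a < |x|} = Set.Iio (-a) ∪ Set.Ioi a := by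
    ext x
    simp only [Set.mem_ofPred_eq, Set.mem_union, Set.mem_Iio, Set.mem_Ioi, lt_abs, lt_neg]
    tauto
  have hdisj : Disjoint (Set.Iio (-a)) (Set.Ioi a) :=
    (Set.Iic_disjoint_Ioi (by linarith)).mono_left Set.Iio_subset_Iic_self
  rw [measureReal_def, withDensity_apply _ (hset ▸ measurableSet_Iio.union measurableSet_Ioi), hset,
    lintegral_union measurableSet_Ioi hdisj, hIio, hIoi,
    ← ENNReal.ofReal_add (by positivity) (by positivity), ENNReal.toReal_ofReal (by positivity)]
  ring

def histBin (N : ℕ) (h : ℝ) (k : ℕ) : Set ℝ :=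
  if k = N - 1 then Set.Icc ((k:ℝ) * h) ((k + 1) * h) else Set.Ico ((k:ℝ) * h) ((k + 1) * h)

noncomputable def histBinIdx (N : ℕ) (h : ℝ) (t : ℝ) : ℕ := min (N - 1) ⌊t / h⌋₊

section Bins

variable {N : ℕ} {h : ℝ} {k : ℕ}

lemma measurableSet_histBin : MeasurableSet (histBin N h k) := by
  unfold histBin; split_ifs <;> measurability

lemma histBin_subset_Icc : histBin N h k ⊆ Set.Icc (k * h) ((k + 1) * h) := by
  unfold histBin; split_ifs
  exacts [subset_rfl, Set.Ico_subset_Icc_self]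

lemma Ico_subset_histBin : Set.Ico (k * h) ((k + 1) * h) ⊆ histBin N h k := by
  unfold histBin; split_ifs
  exacts [Set.Ico_subset_Icc_self, subset_rfl]

lemma histBin_subset_unitInterval (hh : 0 ≤ h) (hNh : N * h = 1) (hk : k < N) :
    histBin N h k ⊆ Set.Icc 0 1 := by
  have hk' : ((k : ℝ) + 1) * h ≤ N * h := by gcongr; exact_mod_cast hk
  exact histBin_subset_Icc.trans (Set.Icc_subset_Icc (by positivity) (hk'.trans_eq hNh))

lemma one_le_of_natCast_mul_eq_one (hNh : N * h = 1) : 1 ≤ N := by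
  rcases Nat.eq_zero_or_pos N with rfl | hN
  · simp at hNh
  · exact hN

lemma histBinIdx_lt (hNh : N * h = 1) (t : ℝ) : histBinIdx N h t < N := by
  have := one_le_of_natCast_mul_eq_one hNh
  unfold histBinIdx; omega

lemma mem_histBin_histBinIdx (hh : 0 < h) (hNh : N * h = 1) {t : ℝ} (ht : t ∈ Set.Icc 0 1) :
    t ∈ histBin N h (histBinIdx N h t) := by
  have hN := one_le_of_natCast_mul_eq_one hNh
  have hfloor : (⌊t / h⌋₊ : ℝ) * h ≤ t := (le_div_iff₀ hh).mp (Nat.floor_le (by positivity [ht.1]))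
  rcases le_or_gt ⌊t / h⌋₊ (N - 1) with hle | hgt
  · rw [histBinIdx, min_eq_right hle]
    exact Ico_subset_histBin ⟨hfloor, (div_lt_iff₀ hh).mp (Nat.lt_floor_add_one _)⟩
  · have ht1 : t = 1 := by
      refine le_antisymm ht.2 (hNh ▸ le_trans ?_ hfloor)
      gcongr
      exact_mod_cast (by omega : N ≤ ⌊t / h⌋₊)
    rw [histBinIdx, min_eq_left hgt.le, histBin, if_pos rfl, Nat.cast_sub hN]
    push_cast
    constructor <;> nlinarith

lemma setIntegral_histBin (hh : 0 ≤ h) (f : ℝ → ℝ) :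
    ∫ x in histBin N h k, f x = ∫ x in (k * h)..((k + 1) * h), f x := by
  rw [intervalIntegral.integral_of_le (by nlinarith), histBin]
  split_ifs
  exacts [integral_Icc_eq_integral_Ioc, setIntegral_congr_set Ico_ae_eq_Ioc]

end Bins

lemma intervalIntegral_abs_sub_le {c d t : ℝ} (hct : c ≤ t) (htd : t ≤ d) :
    ∫ s in c..d, |s - t| ≤ (d - c) ^ 2 / 2 := by
  have hint : ∀ x y : ℝ, IntervalIntegrable (fun s => |s - t|) volume x y := fun x y =>
    (continuous_id.sub continuous_const).abs.intervalIntegrable x y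
  have hleft : ∫ s in c..t, |s - t| = (t - c) ^ 2 / 2 := by
    rw [intervalIntegral.integral_congr (g := fun s => t - s) fun s hs => by
      rw [Set.uIcc_of_le hct] at hs; simp [abs_of_nonpos (sub_nonpos.mpr hs.2)]]
    simp [intervalIntegral.integral_comp_sub_left (fun x => x), integral_id]
  have hright : ∫ s in t..d, |s - t| = (d - t) ^ 2 / 2 := by
    rw [intervalIntegral.integral_congr (g := fun s => s - t) fun s hs => by
      rw [Set.uIcc_of_le htd] at hs; simp [abs_of_nonneg (sub_nonneg.mpr hs.1)]]
    simp [intervalIntegral.integral_comp_sub_right (fun x => x), integral_id]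
  rw [← intervalIntegral.integral_add_adjacent_intervals (hint c t) (hint t d), hleft, hright]
  nlinarith [mul_nonneg (sub_nonneg.mpr hct) (sub_nonneg.mpr htd)]

lemma LipschitzWith.abs_intervalIntegral_sub_mul_le {f : ℝ → ℝ} {K : ℝ≥0}
    (hf : LipschitzWith K f) {c d t : ℝ} (hct : c ≤ t) (htd : t ≤ d) :
    |(∫ s in c..d, f s) - (d - c) * f t| ≤ K * (d - c) ^ 2 / 2 := by
  have hcd : c ≤ d := hct.trans htd
  have hdiff : (∫ s in c..d, f s) - (d - c) * f t = ∫ s in c..d, (f s - f t) := by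
    rw [intervalIntegral.integral_sub (hf.continuous.intervalIntegrable c d)
      intervalIntegrable_const, intervalIntegral.integral_const, smul_eq_mul]
  rw [hdiff, ← Real.norm_eq_abs, mul_div_assoc]
  calc ‖∫ s in c..d, (f s - f t)‖ ≤ ∫ s in c..d, K * |s - t| :=
        intervalIntegral.norm_integral_le_of_norm_le hcd
          (ae_of_all _ fun s _ => by simpa [← Real.dist_eq] using hf.dist_le_mul s t)
          ((continuous_const.mul (continuous_id.sub continuous_const).abs).intervalIntegrable c d)
    _ ≤ K * ((d - c) ^ 2 / 2) := by
        rw [intervalIntegral.integral_const_mul]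
        exact mul_le_mul_of_nonneg_left (intervalIntegral_abs_sub_le hct htd) K.coe_nonneg

lemma measureReal_withDensity_restrict_of_subset {α : Type*} [MeasurableSpace α] {μ : Measure α}
    {f : α → ℝ} {I S : Set α} (hS : MeasurableSet S) (hSI : S ⊆ I) (hf : IntegrableOn f S μ)
    (hf0 : ∀ x ∈ S, 0 ≤ f x) :
    ((μ.restrict I).withDensity fun x => ENNReal.ofReal (f x)).real S = ∫ x in S, f x ∂μ := by
  rw [measureReal_def, withDensity_apply _ hS, Measure.restrict_restrict hS,
    Set.inter_eq_self_of_subset_left hSI, ← ofReal_integral_eq_lintegral_ofReal hf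
    ((ae_restrict_iff' hS).mpr (ae_of_all _ hf0)),
    ENNReal.toReal_ofReal (setIntegral_nonneg hS hf0)]

lemma abs_measureReal_histBin_sub_le {N : ℕ} {h : ℝ} {k : ℕ} {f : ℝ → ℝ} {K : ℝ≥0}
    (hf : LipschitzWith K f) (hf0 : ∀ x ∈ Set.Icc (0 : ℝ) 1, 0 ≤ f x) (hh : 0 < h)
    (hNh : N * h = 1) (hk : k < N) {t : ℝ} (ht : t ∈ histBin N h k) :
    |((volume.restrict (Set.Icc (0 : ℝ) 1)).withDensity fun x => ENNReal.ofReal (f x)).real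
      (histBin N h k) - h * f t| ≤ K * h ^ 2 / 2 := by
  have hsub := histBin_subset_unitInterval hh.le hNh hk
  rw [measureReal_withDensity_restrict_of_subset measurableSet_histBin hsub
    (hf.continuous.integrableOn_Icc.mono_set hsub) fun x hx => hf0 x (hsub hx),
    setIntegral_histBin hh.le]
  have := hf.abs_intervalIntegral_sub_mul_le (histBin_subset_Icc ht).1 (histBin_subset_Icc ht).2
  convert this using 2 <;> ring

lemma abs_histogram_sub_lt {n h ε S p Λ f u a b : ℝ} (hn : 0 < n) (hh : 0 < h) (hε : 0 < ε)
    (hS : |S - n * p| < n * u) (hΛ : |Λ| ≤ a) (hp : |p - h * f| ≤ b) :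
    |1 / (n * h) * (S + 2 / ε * Λ) - f| < (n * u + 2 / ε * a + n * b) / (n * h) := by
  have hsplit : 1 / (n * h) * (S + 2 / ε * Λ) - f =
      ((S - n * p) + 2 / ε * Λ + n * (p - h * f)) / (n * h) := by
    field_simp; ring
  have hΛ' : |2 / ε * Λ| ≤ 2 / ε * a := by
    rw [abs_mul, abs_of_pos (by positivity)]; gcongr
  have hp' : |n * (p - h * f)| ≤ n * b := by
    rw [abs_mul, abs_of_pos hn]; gcongr
  rw [hsplit, abs_div, abs_of_pos (mul_pos hn hh)]
  gcongr ?_ / _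
  linarith [abs_add_three (S - n * p) (2 / ε * Λ) (n * (p - h * f))]

lemma exists_lt_abs_or_le_abs_count_sub_of_lt_abs_sub {n N : ℕ} {h ε γ : ℝ} {K : ℝ≥0}
    {f : ℝ → ℝ} (hf : LipschitzWith K f) (hf0 : ∀ x ∈ Set.Icc (0 : ℝ) 1, 0 ≤ f x) (hn : 0 < n)
    (hh : 0 < h) (hNh : N * h = 1) (hε : 0 < ε) (x : Fin n → ℝ) (noise : ℕ → ℝ) {t : ℝ}
    (ht : t ∈ Set.Icc 0 1)
    (hgt : γ < |1 / (n * h) * ((∑ i, if x i ∈ histBin N h (histBinIdx N h t) then (1 : ℝ) else 0) +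
      2 / ε * noise (histBinIdx N h t)) - f t|) :
    ∃ k < N, γ * h * n * ε / 4 < |noise k| ∨
      n * ((γ - K * h) * h / 2) ≤ |(∑ i, if x i ∈ histBin N h k then (1 : ℝ) else 0) -
        n * ((volume.restrict (Set.Icc (0 : ℝ) 1)).withDensity
          fun x => ENNReal.ofReal (f x)).real (histBin N h k)| := by
  have hk := histBinIdx_lt hNh t
  refine ⟨_, hk, ?_⟩
  by_contra! hsmall
  have hbias := abs_measureReal_histBin_sub_le hf hf0 hh hNh hk (mem_histBin_histBinIdx hh hNh ht)
  have hn' : (0 : ℝ) < n := by exact_mod_cast hn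
  refine hgt.not_ge ((abs_histogram_sub_lt hn' hh hε hsmall.2 hsmall.1 hbias).le.trans_eq ?_)
  field_simp
  ring

theorem stmt_10_general {Ω : Type*} [MeasurableSpace Ω] (P : Measure Ω) [IsProbabilityMeasure P]
    (n : ℕ) (hn : 1 ≤ n)
    (pdf : ℝ → ℝ) (L : ℝ) (hL : 0 ≤ L)
    (hLip : ∀ x y : ℝ, |pdf x - pdf y| ≤ L * |x - y|)
    (hnonneg : ∀ x ∈ Set.Icc (0:ℝ) 1, 0 ≤ pdf x)
    (h : ℝ) (hh : 0 < h) (N : ℕ) (hNh : (N : ℝ) * h = 1)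
    (ε : ℝ) (hε : 0 < ε)
    (X : Fin n → Ω → ℝ) (hX : ∀ i, Measurable (X i))
    (Lap : ℕ → Ω → ℝ) (hLapMeas : ∀ k, Measurable (Lap k))
    (hindep : iIndepFun
      (Sum.elim X (fun j : Fin N => Lap j.1)) P)
    (hlaw : ∀ i, Measure.map (X i) P =
      (volume.restrict (Set.Icc (0:ℝ) 1)).withDensity (fun x => ENNReal.ofReal (pdf x)))
    (hLapLaw : ∀ k < N, Measure.map (Lap k) P =
      volume.withDensity (fun t => ENNReal.ofReal ((1/2) * Real.exp (-|t|))))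
    (B : ℕ → Set ℝ)
    (hB : ∀ k, B k = if k = N - 1 then Set.Icc ((k:ℝ) * h) ((k + 1) * h)
      else Set.Ico ((k:ℝ) * h) ((k + 1) * h))
    (binIdx : ℝ → ℕ) (hbinIdx : ∀ t, binIdx t = min (N - 1) ⌊t / h⌋₊)
    (pdfHat : Ω → ℝ → ℝ)
    (hpdfHat : ∀ ω t, pdfHat ω t = (1 / (n * h)) *
      ((∑ i, if X i ω ∈ B (binIdx t) then (1:ℝ) else 0) + (2 / ε) * Lap (binIdx t) ω))
    (γ : ℝ) (hγ : γ > L * h) :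
    P {ω | ∃ t ∈ Set.Icc (0:ℝ) 1, |pdfHat ω t - pdf t| > γ} ≤
      ENNReal.ofReal ((1 / h) * Real.exp (-(γ * h * n * ε / 4)) +
        (2 / h) * Real.exp (-(h ^ 2 * (γ - L * h) ^ 2 * n / 4))) := by
  obtain rfl : B = histBin N h := funext hB
  obtain rfl : binIdx = histBinIdx N h := funext hbinIdx
  have hpdf : LipschitzWith ⟨L, hL⟩ pdf :=
    LipschitzWith.of_dist_le_mul fun x y => by
      rw [Real.dist_eq, Real.dist_eq]; exact hLip x y
  have hn0 : (0 : ℝ) < n := by exact_mod_cast hn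
  have hγLh : 0 < γ - L * h := sub_pos.mpr hγ
  have hγ0 : 0 < γ := (mul_nonneg hL hh.le).trans_lt hγ
  set ν := (volume.restrict (Set.Icc (0 : ℝ) 1)).withDensity fun x => ENNReal.ofReal (pdf x)
  set a := γ * h * n * ε / 4
  set u := (γ - L * h) * h / 2 with hu
  let count : ℕ → Ω → ℝ := fun k ω => ∑ i, if X i ω ∈ histBin N h k then (1 : ℝ) else 0
  let bad : ℕ → Set Ω := fun k =>
    {ω | a < |Lap k ω|} ∪ {ω | n * u ≤ |count k ω - n * ν.real (histBin N h k)|}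
  have hXind : iIndepFun X P := hindep.precomp (g := Sum.inl) Sum.inl_injective
  have hbad : ∀ k < N, P.real (bad k) ≤ exp (-a) + 2 * exp (-2 * n * u ^ 2) := by
    intro k hk
    refine (measureReal_union_le _ _).trans (add_le_add (le_of_eq ?_) ?_)
    · change P.real (Lap k ⁻¹' {x | a < |x|}) = _
      rw [← map_measureReal_apply (hLapMeas k)
        (measurableSet_lt measurable_const continuous_abs.measurable), hLapLaw k hk]
      exact laplaceMeasure_real_setOf_lt_abs (by positivity)
    · exact measureReal_le_abs_count_sub_le hXind hX hlaw
        measurableSet_histBin (by positivity)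
  have hincl : {ω | ∃ t ∈ Set.Icc (0 : ℝ) 1, |pdfHat ω t - pdf t| > γ} ⊆
      ⋃ k ∈ range N, bad k := by
    rintro ω ⟨t, ht, hgt⟩
    rw [hpdfHat] at hgt
    obtain ⟨k, hk, hω⟩ := exists_lt_abs_or_le_abs_count_sub_of_lt_abs_sub hpdf hnonneg hn hh hNh hε
      (X · ω) (Lap · ω) ht hgt
    exact Set.mem_biUnion (mem_range.mpr hk) hω
  have hNinv : (N : ℝ) = 1 / h := eq_one_div_of_mul_eq_one_left hNh
  rw [← ofReal_measureReal]
  refine ENNReal.ofReal_le_ofReal ?_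
  calc P.real {ω | ∃ t ∈ Set.Icc (0 : ℝ) 1, |pdfHat ω t - pdf t| > γ}
      ≤ ∑ k ∈ range N, P.real (bad k) :=
        (measureReal_mono hincl (measure_ne_top _ _)).trans (measureReal_biUnion_finset_le _ _)
    _ ≤ N * (exp (-a) + 2 * exp (-2 * n * u ^ 2)) :=
        (sum_le_sum fun k hk => hbad k (mem_range.mp hk)).trans_eq
          (by rw [sum_const, card_range, nsmul_eq_mul])
    _ = 1 / h * exp (-a) + 2 / h * exp (-2 * n * u ^ 2) := by rw [hNinv]; ring
    _ ≤ _ := by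
      gcongr
      rw [hu]
      nlinarith [mul_nonneg hn0.le (sq_nonneg (h * (γ - L * h)))]

/-- Utility of the private histogram density estimator: for i.i.d. samples from
an `L`-Lipschitz density `π` on `[0,1]`, the `ε`-DP histogram estimator with
bin size `h` (with `1/h = N ∈ ℕ` bins, each bin count perturbed by independent
Laplace(1) noise scaled by `2/ε`) satisfies, for any `γ > Lh`,
`P(‖π̂ - π‖_∞ > γ) ≤ (1/h)exp(-γhnε/4) + (2/h)exp(-h²(γ-Lh)²n/4)`. -/
theorem stmt_10 {Ω : Type*} [MeasurableSpace Ω] (P : Measure Ω) [IsProbabilityMeasure P]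
    (n : ℕ) (hn : 1 ≤ n)
    (pdf : ℝ → ℝ) (L : ℝ) (hL : 0 ≤ L)
    (hLip : ∀ x y : ℝ, |pdf x - pdf y| ≤ L * |x - y|)
    (hnonneg : ∀ x ∈ Set.Icc (0:ℝ) 1, 0 ≤ pdf x)
    (h : ℝ) (hh : 0 < h) (N : ℕ) (hN : 1 ≤ N) (hNh : (N : ℝ) * h = 1)
    (ε : ℝ) (hε : 0 < ε)
    (X : Fin n → Ω → ℝ) (hX : ∀ i, Measurable (X i))
    (Lap : ℕ → Ω → ℝ) (hLapMeas : ∀ k, Measurable (Lap k))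
    (hindep : iIndepFun
      (Sum.elim X (fun j : Fin N => Lap j.1)) P)
    (hlaw : ∀ i, Measure.map (X i) P =
      (volume.restrict (Set.Icc (0:ℝ) 1)).withDensity (fun x => ENNReal.ofReal (pdf x)))
    (hLapLaw : ∀ k < N, Measure.map (Lap k) P =
      volume.withDensity (fun t => ENNReal.ofReal ((1/2) * Real.exp (-|t|))))
    (B : ℕ → Set ℝ)
    (hB : ∀ k, B k = if k = N - 1 then Set.Icc ((k:ℝ) * h) ((k + 1) * h)
      else Set.Ico ((k:ℝ) * h) ((k + 1) * h))
    (binIdx : ℝ → ℕ) (hbinIdx : ∀ t, binIdx t = min (N - 1) ⌊t / h⌋₊)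
    (pdfHat : Ω → ℝ → ℝ)
    (hpdfHat : ∀ ω t, pdfHat ω t = (1 / (n * h)) *
      ((∑ i, if X i ω ∈ B (binIdx t) then (1:ℝ) else 0) + (2 / ε) * Lap (binIdx t) ω))
    (γ : ℝ) (hγ : γ > L * h) :
    P {ω | ∃ t ∈ Set.Icc (0:ℝ) 1, |pdfHat ω t - pdf t| > γ} ≤
      ENNReal.ofReal ((1 / h) * Real.exp (-(γ * h * n * ε / 4)) +
        (2 / h) * Real.exp (-(h ^ 2 * (γ - L * h) ^ 2 * n / 4))) :=
  stmt_10_general P n hn pdf L hL hLip hnonneg h hh N hNh ε hε X hX Lap hLapMeas hindep hlaw hLapLaw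
    B hB binIdx hbinIdx pdfHat hpdfHat γ hγ
end

section
/- Let X_1, ..., X_n be i.i.d. samples from a distribution on [0,1] with density π bounded below by π̲ > 0. Let p ∈ (0,1) and γ > 0 with γ < min(F_π^{-1}(p), 1 - F_π^{-1}(p)). Define N̄ = Σ_{i=1}^n 1{X_i > F_π^{-1}(p) + γ}. Then for every integer k with k + 1 ≤ (1/2)·n·γ·π̲, P(X_(⌊np⌋ + k) > F_π^{-1}(p) + γ) ≤ exp(-γ²π̲²n/(8(1-p))). -/
/-!
Put `q = F⁻¹(p) + γ` and `m = ⌊np⌋ + k`. If the `m`-th order statistic exceeds `q`, then at least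
`n + 1 - m` samples exceed `q`. Since the density is at least `π̲` on `[0, 1]`, the mass of
`(0, q]` exceeds the level `p` by at least `π̲γ`, so each sample exceeds `q` with probability at
most `b = 1 - p - π̲γ`, while the choice of `k` gives `n + 1 - m ≥ n b + n π̲γ / 2`. Chernoff's
bound for the number of samples above `q`, taken at `t = log (1 + π̲γ / (2b))` (when `b > 0`)
and combined with `log (1 + x) ≥ 2x / (x + 2)`, yields the exponent `-(π̲γ)² n / (8 (1 - p))`.
-/

open MeasureTheory ProbabilityTheory
open Real Set Finset

section Density

variable {α : Type*} [MeasurableSpace α] {μ : Measure α} {K A : Set α} {f : α → ℝ}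

lemma mul_measureReal_le_withDensity_real {c : ℝ} (hc : 0 ≤ c)
    (hf : ∀ᵐ x ∂μ.restrict K, c ≤ f x) (hA : MeasurableSet A) (hAK : A ⊆ K)
    (hfin : (μ.restrict K).withDensity (fun x => ENNReal.ofReal (f x)) A ≠ ⊤) :
    c * μ.real A ≤ ((μ.restrict K).withDensity fun x => ENNReal.ofReal (f x)).real A := by
  have h : ENNReal.ofReal c * μ A ≤
      (μ.restrict K).withDensity (fun x => ENNReal.ofReal (f x)) A := by
    rw [withDensity_apply _ hA, Measure.restrict_restrict hA, inter_eq_left.mpr hAK,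
      ← setLIntegral_const]
    exact lintegral_mono_ae ((ae_restrict_of_ae_restrict_of_subset hAK hf).mono
      fun x hx => ENNReal.ofReal_le_ofReal hx)
  simpa [measureReal_def, ENNReal.toReal_mul, hc] using ENNReal.toReal_mono hfin h

lemma setIntegral_le_withDensity_real (hf : ∀ᵐ x ∂μ.restrict K, 0 ≤ f x)
    (hA : MeasurableSet A) (hAK : A ⊆ K) :
    ∫ x in A, f x ∂μ ≤ ((μ.restrict K).withDensity fun x => ENNReal.ofReal (f x)).real A := by
  by_cases hm : AEStronglyMeasurable f (μ.restrict A)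
  · rw [integral_eq_lintegral_of_nonneg_ae (ae_restrict_of_ae_restrict_of_subset hAK hf) hm,
      measureReal_def, withDensity_apply _ hA, Measure.restrict_restrict hA,
      inter_eq_left.mpr hAK]
  · rw [integral_non_aestronglyMeasurable hm]
    exact measureReal_nonneg

end Density

lemma add_mul_sub_sInf_le {F G : ℝ → ℝ} {p c q : ℝ}
    (hFG : ∀ t ∈ Ioo 0 q, F t ≤ G t) (hG : ∀ t ∈ Ioo 0 q, G t + c * (q - t) ≤ G q)
    (hpos : 0 < sInf {t | p ≤ F t}) (hq : sInf {t | p ≤ F t} < q) :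
    p + c * (q - sInf {t | p ≤ F t}) ≤ G q := by
  set S := {t | p ≤ F t}
  have hne : S.Nonempty := by
    by_contra h
    rw [not_nonempty_iff_eq_empty.mp h, Real.sInf_empty] at hpos
    exact hpos.false
  have hbdd : BddBelow S := by
    by_contra h
    rw [Real.sInf_of_not_bddBelow h] at hpos
    exact hpos.false
  have hclosed : IsClosed ({t | p + c * (q - t) ≤ G q} ∪ Ici q) :=
    (isClosed_le (by fun_prop) continuous_const).union isClosed_Ici
  have hsub : S ⊆ {t | p + c * (q - t) ≤ G q} ∪ Ici q := by
    intro t ht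
    rcases lt_or_ge t q with htq | htq
    · have hmem : t ∈ Ioo 0 q := ⟨hpos.trans_le (csInf_le hbdd ht), htq⟩
      refine Or.inl (?_ : p + c * (q - t) ≤ G q)
      linarith [hFG t hmem, hG t hmem, show p ≤ F t from ht]
    · exact Or.inr htq
  rcases closure_minimal hsub hclosed (csInf_mem_closure hne hbdd) with h | h
  · exact h
  · exact absurd h (not_le.mpr hq)

lemma measureReal_Ioi_sInf_add_le {pdf F : ℝ → ℝ} {c p γ : ℝ}
    [IsProbabilityMeasure
      ((volume.restrict (Icc (0:ℝ) 1)).withDensity fun x => ENNReal.ofReal (pdf x))]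
    (hc : 0 ≤ c) (hlow : ∀ᵐ x ∂volume.restrict (Icc (0:ℝ) 1), c ≤ pdf x)
    (hF : ∀ t, F t = ∫ x in (0:ℝ)..t, pdf x)
    (hpos : 0 < sInf {t | p ≤ F t}) (hγ : 0 < γ) (hle : sInf {t | p ≤ F t} + γ ≤ 1) :
    ((volume.restrict (Icc (0:ℝ) 1)).withDensity fun x => ENNReal.ofReal (pdf x)).real
      (Ioi (sInf {t | p ≤ F t} + γ)) ≤ 1 - p - c * γ := by
  set ν := (volume.restrict (Icc (0:ℝ) 1)).withDensity fun x => ENNReal.ofReal (pdf x)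
  set q := sInf {t | p ≤ F t} + γ
  have hFG : ∀ t ∈ Ioo 0 q, F t ≤ ν.real (Ioc 0 t) := fun t ht => by
    rw [hF, intervalIntegral.integral_of_le ht.1.le]
    exact setIntegral_le_withDensity_real (hlow.mono fun x hx => hc.trans hx) measurableSet_Ioc
      fun x hx => ⟨hx.1.le, hx.2.trans (ht.2.le.trans hle)⟩
  have hG : ∀ t ∈ Ioo 0 q, ν.real (Ioc 0 t) + c * (q - t) ≤ ν.real (Ioc 0 q) := fun t ht => by
    rw [← Ioc_union_Ioc_eq_Ioc ht.1.le ht.2.le,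
      measureReal_union (Ioc_disjoint_Ioc_of_le le_rfl) measurableSet_Ioc,
      ← Real.volume_real_Ioc_of_le ht.2.le]
    gcongr
    exact mul_measureReal_le_withDensity_real hc hlow measurableSet_Ioc
      (fun x hx => ⟨ht.1.le.trans hx.1.le, hx.2.trans hle⟩) (measure_ne_top _ _)
  have hquantile := add_mul_sub_sInf_le hFG hG hpos (by linarith)
  have htotal : ν.real (Ioc 0 q) + ν.real (Ioi q) ≤ 1 := by
    rw [← measureReal_union (Ioc_disjoint_Ioi le_rfl) measurableSet_Ioi]
    exact measureReal_le_one
  have hgap : q - sInf {t | p ≤ F t} = γ := by ring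
  rw [hgap] at hquantile
  linarith

lemma add_one_le_card_filter_mem_add {β : Type*} [Preorder β] {n m : ℕ} {x : Fin n → β}
    {y : ℕ → β} {B : Set β} [DecidablePred (· ∈ B)] (hB : IsUpperSet B)
    (hsort : ∀ i j, 1 ≤ i → i ≤ j → j ≤ n → y i ≤ y j)
    (hperm : ∃ σ : Equiv.Perm (Fin n), ∀ i : Fin n, y (i.1 + 1) = x (σ i))
    (hm1 : 1 ≤ m) (hmn : m ≤ n) (hy : y m ∈ B) :
    n + 1 ≤ #{i | x i ∈ B} + m := by
  obtain ⟨σ, hσ⟩ := hperm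
  have hcard : #(Ici (⟨m - 1, by omega⟩ : Fin n)) ≤ #{i | x i ∈ B} := by
    refine card_le_card_of_injOn σ (fun j hj => ?_) σ.injective.injOn
    have hj : m - 1 ≤ j.1 := Fin.le_def.mp (mem_Ici.mp hj)
    rw [mem_coe, mem_filter, ← hσ j]
    exact ⟨mem_univ _, hB (hsort m (j.1 + 1) hm1 (by omega) (by omega)) hy⟩
  rw [Fin.card_Ici, Fin.val_mk] at hcard
  omega

lemma exp_mul_indicator_one {Ω : Type*} (s : Set Ω) (t : ℝ) (ω : Ω) :
    exp (t * s.indicator 1 ω) = 1 + (exp t - 1) * s.indicator 1 ω := by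
  by_cases h : ω ∈ s <;> simp [h]

section Chernoff

variable {Ω : Type*} [MeasurableSpace Ω] {P : Measure Ω} [IsProbabilityMeasure P]

lemma mgf_indicator_one {s : Set Ω} (hs : MeasurableSet s) (t : ℝ) :
    mgf (s.indicator 1) P t = 1 + (exp t - 1) * P.real s := by
  have hs1 : Integrable (s.indicator (1 : Ω → ℝ)) P := (integrable_const (1:ℝ)).indicator hs
  simp_rw [mgf, exp_mul_indicator_one]
  rw [integral_add (integrable_const _) (hs1.const_mul _), integral_const_mul,
    integral_indicator_one hs]
  simp

lemma measureReal_le_card_filter_mem_le {ι β : Type*} [Fintype ι] [MeasurableSpace β]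
    {X : ι → Ω → β} (hX : ∀ i, Measurable (X i)) (hind : iIndepFun X P)
    {B : Set β} [DecidablePred (· ∈ B)] (hB : MeasurableSet B) {a b t : ℝ}
    (hb : ∀ i, P.real (X i ⁻¹' B) ≤ b) (ht : 0 ≤ t) :
    P.real {ω | a ≤ #{i | X i ω ∈ B}} ≤ exp (Fintype.card ι * b * (exp t - 1) - t * a) := by
  set Z : ι → Ω → ℝ := fun i => (X i ⁻¹' B).indicator 1
  have hZ : ∀ i, Measurable (Z i) := fun i => measurable_one.indicator (hX i hB)
  have hZind : iIndepFun Z P :=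
    hind.comp (fun _ => B.indicator (1 : β → ℝ)) fun _ => measurable_one.indicator hB
  have hcount : ∀ ω, (#{i | X i ω ∈ B} : ℝ) = (∑ i, Z i) ω := fun ω => by
    simp only [Z, Finset.sum_apply, Set.indicator, Set.mem_preimage, Pi.one_apply]
    rw [Finset.sum_boole]
  have hmgf : ∀ i, mgf (Z i) P t ≤ exp (b * (exp t - 1)) := fun i => by
    rw [mgf_indicator_one (hX i hB)]
    have : 0 ≤ exp t - 1 := by linarith [one_le_exp ht]
    nlinarith [add_one_le_exp (b * (exp t - 1)), hb i]
  have hint : Integrable (fun ω => exp (t * (∑ i, Z i) ω)) P := by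
    refine hZind.integrable_exp_mul_sum hZ fun i _ => ?_
    have hi : Integrable ((X i ⁻¹' B).indicator (1 : Ω → ℝ)) P :=
      (integrable_const (1:ℝ)).indicator (hX i hB)
    simp_rw [Z, exp_mul_indicator_one]
    exact (integrable_const _).add (hi.const_mul _)
  simp_rw [hcount]
  calc P.real {ω | a ≤ (∑ i, Z i) ω}
      ≤ exp (-t * a) * mgf (∑ i, Z i) P t := measure_ge_le_exp_mul_mgf a ht hint
    _ = exp (-t * a) * ∏ i, mgf (Z i) P t := by rw [hZind.mgf_sum hZ]
    _ ≤ exp (-t * a) * ∏ _i : ι, exp (b * (exp t - 1)) := by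
        gcongr with i
        · exact fun i _ => mgf_nonneg
        · exact hmgf i
    _ = exp (Fintype.card ι * b * (exp t - 1) - t * a) := by
        rw [prod_const, card_univ, ← exp_nat_mul, ← exp_add]
        ring_nf

end Chernoff

lemma exists_nonneg_mul_exp_sub_one_sub_mul_le {N a b g : ℝ} (hN : 0 ≤ N) (hb : 0 ≤ b)
    (hg : 0 < g) (ha : N * b + N * g / 2 ≤ a) :
    ∃ t, 0 ≤ t ∧ N * b * (exp t - 1) - t * a ≤ -(N * g ^ 2 / (8 * (b + g))) := by
  rcases hb.eq_or_lt with rfl | hb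
  · refine ⟨1 / 4, by norm_num, ?_⟩
    have : N * g ^ 2 / (8 * (0 + g)) = N * g / 8 := by field_simp; ring
    rw [this]
    linarith
  have hδ : 0 < g / (2 * b) := by positivity
  have hlog : 2 * g / (g + 4 * b) ≤ log (1 + g / (2 * b)) := by
    have h := le_log_one_add_of_nonneg hδ.le
    have : 2 * (g / (2 * b)) / (g / (2 * b) + 2) = 2 * g / (g + 4 * b) := by
      field_simp
      ring
    rwa [this] at h
  refine ⟨log (1 + g / (2 * b)), log_nonneg (by linarith), ?_⟩
  rw [exp_log (by positivity)]
  calc N * b * (1 + g / (2 * b) - 1) - log (1 + g / (2 * b)) * a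
      ≤ N * g / 2 - 2 * g / (g + 4 * b) * (N * b + N * g / 2) := by
        have h1 : N * b * (1 + g / (2 * b) - 1) = N * g / 2 := by field_simp; ring
        have h2 := mul_le_mul hlog ha (by positivity)
          ((by positivity : (0:ℝ) ≤ 2 * g / (g + 4 * b)).trans hlog)
        linarith
    _ = -(N * g ^ 2 / (2 * (g + 4 * b))) := by
        field_simp
        ring
    _ ≤ -(N * g ^ 2 / (8 * (b + g))) :=
        neg_le_neg (div_le_div_of_nonneg_left (by positivity) (by positivity) (by linarith))

theorem stmt_11_general {Ω : Type*} [MeasurableSpace Ω] (P : Measure Ω) [IsProbabilityMeasure P]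
    (n : ℕ)
    (pdf : ℝ → ℝ) (piLow : ℝ) (hlow : 0 < piLow)
    (hbound : ∀ᵐ x ∂(volume.restrict (Set.Icc (0:ℝ) 1)), piLow ≤ pdf x)
    (X : Fin n → Ω → ℝ) (hX : ∀ i, Measurable (X i))
    (hindep : iIndepFun X P)
    (hlaw : ∀ i, Measure.map (X i) P =
      (volume.restrict (Set.Icc (0:ℝ) 1)).withDensity (fun x => ENNReal.ofReal (pdf x)))
    (Y : ℕ → Ω → ℝ)
    (hsort : ∀ ω, ∀ i j, 1 ≤ i → i ≤ j → j ≤ n → Y i ω ≤ Y j ω)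
    (hperm : ∀ ω, ∃ σ : Equiv.Perm (Fin n), ∀ i : Fin n, Y (i.1 + 1) ω = X (σ i) ω)
    (F Finv : ℝ → ℝ)
    (hF : ∀ t, F t = ∫ x in (0:ℝ)..t, pdf x)
    (hFinv : ∀ q, Finv q = sInf {t : ℝ | q ≤ F t})
    (p : ℝ)
    (γ : ℝ) (hγ0 : 0 < γ) (hγ1 : γ < min (Finv p) (1 - Finv p))
    (k : ℤ) (hk : (k : ℝ) + 1 ≤ (1/2) * n * γ * piLow)
    (hidx1 : 1 ≤ ⌊(n:ℝ) * p⌋ + k) (hidx2 : ⌊(n:ℝ) * p⌋ + k ≤ (n:ℤ)) :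
    P {ω | Y (⌊(n:ℝ) * p⌋ + k).toNat ω > Finv p + γ} ≤
      ENNReal.ofReal (Real.exp (-(γ ^ 2 * piLow ^ 2 * n / (8 * (1 - p))))) := by
  set m := (⌊(n:ℝ) * p⌋ + k).toNat
  have hm : (m : ℤ) = ⌊(n:ℝ) * p⌋ + k := Int.toNat_of_nonneg (by omega)
  have hmR : (m : ℝ) = ⌊(n:ℝ) * p⌋ + k := by exact_mod_cast hm
  have hn : 0 < n := by omega
  set ν := (volume.restrict (Icc (0:ℝ) 1)).withDensity fun x => ENNReal.ofReal (pdf x)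
  have : IsProbabilityMeasure ν := by
    rw [← hlaw ⟨0, hn⟩]
    exact Measure.isProbabilityMeasure_map (hX _).aemeasurable
  obtain ⟨hγ_Finv, hγ_one⟩ := lt_min_iff.mp hγ1
  have htail : ∀ i, P.real (X i ⁻¹' Ioi (Finv p + γ)) ≤ 1 - p - piLow * γ := fun i => by
    rw [← map_measureReal_apply (hX i) measurableSet_Ioi, hlaw i, hFinv p]
    exact measureReal_Ioi_sInf_add_le hlow.le hbound hF (by linarith [hFinv p]) hγ0
      (by linarith [hFinv p])
  have hcount : {ω | Y m ω > Finv p + γ} ⊆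
      {ω | (n:ℝ) + 1 - m ≤ #{i | X i ω ∈ Ioi (Finv p + γ)}} := fun ω hω => by
    have h : (n + 1 : ℝ) ≤ #{i | X i ω ∈ Ioi (Finv p + γ)} + m := by
      exact_mod_cast add_one_le_card_filter_mem_add (x := fun i => X i ω) (isUpperSet_Ioi _)
        (hsort ω) (hperm ω) (by omega) (by omega) hω
    exact sub_le_iff_le_add.mpr h
  obtain ⟨t, ht, hexp⟩ := exists_nonneg_mul_exp_sub_one_sub_mul_le (N := n) (a := n + 1 - m)
    (g := piLow * γ) (Nat.cast_nonneg n) (measureReal_nonneg.trans (htail ⟨0, hn⟩))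
    (by positivity) (by linarith [Int.floor_le ((n:ℝ) * p)])
  have hchernoff := measureReal_le_card_filter_mem_le hX hindep measurableSet_Ioi htail ht
    (a := n + 1 - m)
  rw [Fintype.card_fin] at hchernoff
  calc P {ω | Y m ω > Finv p + γ}
      ≤ P {ω | (n:ℝ) + 1 - m ≤ #{i | X i ω ∈ Ioi (Finv p + γ)}} := measure_mono hcount
    _ ≤ _ := by
        rw [ENNReal.le_ofReal_iff_toReal_le (measure_ne_top _ _) (exp_pos _).le]
        exact hchernoff.trans (exp_le_exp.mpr (hexp.trans_eq (by ring)))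

/-- One-sided concentration of order statistics: for i.i.d. samples with density
`π ≥ π̲ > 0` on `[0,1]`, for any integer `k` with `k + 1 ≤ nγπ̲/2` (and such
that `⌊np⌋ + k` is a valid index), the order statistic of index `⌊np⌋ + k`
exceeds `F_π⁻¹(p) + γ` with probability at most `exp(-γ²π̲²n/(8(1-p)))`. -/
theorem stmt_11 {Ω : Type*} [MeasurableSpace Ω] (P : Measure Ω) [IsProbabilityMeasure P]
    (n : ℕ) (hn : 1 ≤ n)
    (pdf : ℝ → ℝ) (piLow : ℝ) (hlow : 0 < piLow)
    (hbound : ∀ᵐ x ∂(volume.restrict (Set.Icc (0:ℝ) 1)), piLow ≤ pdf x)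
    (X : Fin n → Ω → ℝ) (hX : ∀ i, Measurable (X i))
    (hindep : iIndepFun X P)
    (hlaw : ∀ i, Measure.map (X i) P =
      (volume.restrict (Set.Icc (0:ℝ) 1)).withDensity (fun x => ENNReal.ofReal (pdf x)))
    (Y : ℕ → Ω → ℝ)
    (hsort : ∀ ω, ∀ i j, 1 ≤ i → i ≤ j → j ≤ n → Y i ω ≤ Y j ω)
    (hperm : ∀ ω, ∃ σ : Equiv.Perm (Fin n), ∀ i : Fin n, Y (i.1 + 1) ω = X (σ i) ω)
    (F Finv : ℝ → ℝ)
    (hF : ∀ t, F t = ∫ x in (0:ℝ)..t, pdf x)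
    (hFinv : ∀ q, Finv q = sInf {t : ℝ | q ≤ F t})
    (p : ℝ) (hp : p ∈ Set.Ioo (0:ℝ) 1)
    (γ : ℝ) (hγ0 : 0 < γ) (hγ1 : γ < min (Finv p) (1 - Finv p))
    (k : ℤ) (hk : (k : ℝ) + 1 ≤ (1/2) * n * γ * piLow)
    (hidx1 : 1 ≤ ⌊(n:ℝ) * p⌋ + k) (hidx2 : ⌊(n:ℝ) * p⌋ + k ≤ (n:ℤ)) :
    P {ω | Y (⌊(n:ℝ) * p⌋ + k).toNat ω > Finv p + γ} ≤
      ENNReal.ofReal (Real.exp (-(γ ^ 2 * piLow ^ 2 * n / (8 * (1 - p))))) :=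
  stmt_11_general P n pdf piLow hlow hbound X hX hindep hlaw Y hsort hperm F Finv hF hFinv p γ hγ0
    hγ1 k hk hidx1 hidx2
end

section
/- Let Q be a distribution on [0,1] with density proportional to exp((ε/2)·u(q)) where u(q) = -| |{i : X_i < q}| - ⌊np⌋ | for fixed sorted points X_1 ≤ ... ≤ X_n in [0,1] satisfying min_i (X_(i+1) - X_(i)) ≥ Δ > 0 (with X_(0) = 0, X_(n+1) = 1). If q ~ Q and 𝔈 = | |{i : X_i < q}| - ⌊np⌋ |, then for any β ∈ (0,1), P( 𝔈 ≥ 2(ln(1/Δ) + ln(1/β))/ε ) ≤ β. -/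
/-!
The density `exp (ε/2 · u)` is at most `exp (-(ε/2) T) = Δβ` where the error is at least the
threshold `T`, so the unnormalised mass of that event is at most `Δβ`. On the other hand the
rank `k = ⌊np⌋ < n` is attained on the whole gap `(X₍ₖ₎, X₍ₖ₊₁₎]` (with `X₍₀₎ = 0`), of length
at least `Δ`, where the density is `1`; so the total mass is at least `Δ`, and normalising
gives the bound `β`.
-/

open MeasureTheory Finset
open scoped ENNReal

section Rank

variable {n : ℕ} {X : Fin n → ℝ}

theorem card_filter_lt_eq {q : ℝ} {k : ℕ} (hk : k ≤ n)
    (hbelow : ∀ i : Fin n, (i : ℕ) < k → X i < q) (habove : ∀ i : Fin n, k ≤ i → q ≤ X i) :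
    #{i | X i < q} = k := by
  have hiff : ∀ i : Fin n, X i < q ↔ (i : ℕ) < k := fun i =>
    ⟨fun h => by_contra fun hi => (habove i (not_lt.1 hi)).not_gt h, hbelow i⟩
  rw [filter_congr fun i _ => hiff i, Fin.card_filter_val_lt, min_eq_right hk]

theorem exists_Ioc_subset_Icc_card_filter_lt_eq {Δ : ℝ} (hX : ∀ i, X i ∈ Set.Icc (0 : ℝ) 1)
    (hmono : Monotone X) (hgapLow : ∀ i, Δ ≤ X i)
    (hgap : ∀ i j : Fin n, i ≠ j → Δ ≤ |X i - X j|) {k : ℕ} (hk : k < n) :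
    ∃ a, Set.Ioc a (a + Δ) ⊆ Set.Icc 0 1 ∧ ∀ q ∈ Set.Ioc a (a + Δ), #{i | X i < q} = k := by
  rcases k with _ | j
  · refine ⟨0, fun q hq => ⟨hq.1.le, ?_⟩, fun q hq => card_filter_lt_eq hk.le (by simp) ?_⟩
    · linarith [hq.2, hgapLow ⟨0, hk⟩, (hX ⟨0, hk⟩).2]
    · exact fun i _ => by linarith [hq.2, hgapLow i]
  · set lo : Fin n := ⟨j, by omega⟩
    set hi : Fin n := ⟨j + 1, hk⟩
    have hstep : X lo + Δ ≤ X hi := by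
      have hle : X lo ≤ X hi := hmono (show lo ≤ hi from j.le_succ)
      have := hgap hi lo (by simp [lo, hi, Fin.ext_iff])
      rw [abs_of_nonneg (sub_nonneg.2 hle)] at this
      linarith
    refine ⟨X lo, fun q hq => ⟨(hX lo).1.trans hq.1.le, hq.2.trans (hstep.trans (hX hi).2)⟩,
      fun q hq => card_filter_lt_eq hk.le (fun i hi' => ?_) (fun i hi' => ?_)⟩
    · exact (hmono (show i ≤ lo from Nat.lt_succ_iff.1 hi')).trans_lt hq.1
    · exact hq.2.trans (hstep.trans (hmono (show hi ≤ i from hi')))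

end Rank

theorem exp_half_mul_neg_le_mul {ε Δ β t : ℝ} (hε : 0 < ε) (hΔ : 0 < Δ) (hβ : 0 < β)
    (ht : 2 * (Real.log (1 / Δ) + Real.log (1 / β)) / ε ≤ t) :
    Real.exp (ε / 2 * -t) ≤ Δ * β := by
  have ht' := (div_le_iff₀ hε).1 ht
  rw [one_div, one_div, Real.log_inv, Real.log_inv] at ht'
  calc Real.exp (ε / 2 * -t) ≤ Real.exp (Real.log (Δ * β)) := by
        rw [Real.log_mul hΔ.ne' hβ.ne']
        exact Real.exp_le_exp.2 (by linarith)
    _ = Δ * β := Real.exp_log (mul_pos hΔ hβ)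

section WithDensity

variable {α : Type*} [MeasurableSpace α] {ν : Measure α} {f : α → ℝ≥0∞} {s : Set α} {c : ℝ≥0∞}

theorem withDensity_apply_le_mul [SFinite ν] (h : ∀ x ∈ s, f x ≤ c) :
    ν.withDensity f s ≤ c * ν s := by
  rw [withDensity_apply' _ s, ← setLIntegral_const]
  exact setLIntegral_mono measurable_const h

theorem mul_le_withDensity_apply (hs : MeasurableSet s) (h : ∀ x ∈ s, c ≤ f x) :
    c * ν s ≤ ν.withDensity f s := by
  rw [withDensity_apply _ hs, ← setLIntegral_const]
  exact setLIntegral_mono' hs h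

theorem inv_measure_univ_smul_apply_le {μ : Measure α} {a b : ℝ≥0∞} (ha₀ : a ≠ 0) (ha : a ≠ ∞)
    (hmass : a ≤ μ Set.univ) (hs : μ s ≤ a * b) : ((μ Set.univ)⁻¹ • μ) s ≤ b :=
  calc (μ Set.univ)⁻¹ * μ s ≤ a⁻¹ * (a * b) := mul_le_mul' (ENNReal.inv_le_inv.2 hmass) hs
    _ = b := by rw [← mul_assoc, ENNReal.inv_mul_cancel ha₀ ha, one_mul]

end WithDensity

theorem stmt_15_general (n : ℕ) (hn : 1 ≤ n) (X : Fin n → ℝ)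
    (hX : ∀ i, X i ∈ Set.Icc (0:ℝ) 1)
    (hmono : ∀ i j : Fin n, i ≤ j → X i ≤ X j)
    (Δ : ℝ) (hΔ : 0 < Δ)
    (hgapLow : ∀ i, Δ ≤ X i)
    (hgap : ∀ i j : Fin n, i ≠ j → Δ ≤ |X i - X j|)
    (p : ℝ) (hp : p ∈ Set.Ioo (0:ℝ) 1) (ε : ℝ) (hε : 0 < ε)
    (u : ℝ → ℝ)
    (hu : ∀ q : ℝ, u q =
      -|((Finset.univ.filter (fun i : Fin n => X i < q)).card : ℝ) - ⌊(n:ℝ) * p⌋|)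
    (μ Q : Measure ℝ)
    (hμ : μ = (volume.restrict (Set.Icc (0:ℝ) 1)).withDensity
      (fun q => ENNReal.ofReal (Real.exp (ε / 2 * u q))))
    (hQ : Q = (μ Set.univ)⁻¹ • μ)
    (β : ℝ) (hβ : β ∈ Set.Ioo (0:ℝ) 1) :
    Q {q : ℝ |
        2 * (Real.log (1/Δ) + Real.log (1/β)) / ε ≤
          |((Finset.univ.filter (fun i : Fin n => X i < q)).card : ℝ) - ⌊(n:ℝ) * p⌋|} ≤
      ENNReal.ofReal β := by
  have hnp : 0 ≤ (n : ℝ) * p := by positivity [hp.1.le]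
  have hk : ⌊(n : ℝ) * p⌋₊ < n := (Nat.floor_lt hnp).2 <| by
    nlinarith [hp.2, (Nat.one_le_cast (α := ℝ)).2 hn]
  obtain ⟨a, hsub, hrank⟩ := exists_Ioc_subset_Icc_card_filter_lt_eq hX hmono hgapLow hgap hk
  have hmass : ENNReal.ofReal Δ ≤ μ Set.univ := by
    have hone : ∀ q ∈ Set.Ioc a (a + Δ), 1 ≤ ENNReal.ofReal (Real.exp (ε / 2 * u q)) :=
      fun q hq => by simp [hu, hrank q hq, ← natCast_floor_eq_intCast_floor hnp]
    calc ENNReal.ofReal Δ = 1 * volume.restrict (Set.Icc 0 1) (Set.Ioc a (a + Δ)) := by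
          rw [one_mul, Measure.restrict_eq_self _ hsub, Real.volume_Ioc, add_sub_cancel_left]
      _ ≤ μ (Set.Ioc a (a + Δ)) := hμ ▸ mul_le_withDensity_apply measurableSet_Ioc hone
      _ ≤ μ Set.univ := measure_mono (Set.subset_univ _)
  rw [hQ]
  refine inv_measure_univ_smul_apply_le (by simpa using hΔ) ENNReal.ofReal_ne_top hmass ?_
  rw [hμ, ← ENNReal.ofReal_mul hΔ.le]
  refine (withDensity_apply_le_mul (c := ENNReal.ofReal (Δ * β)) fun q hq => ?_).trans ?_
  · exact ENNReal.ofReal_le_ofReal (hu q ▸ exp_half_mul_neg_le_mul hε hΔ hβ.1 hq)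
  · refine mul_le_of_le_one_right' ((measure_mono (Set.subset_univ _)).trans ?_)
    simp [Real.volume_Icc]

/-- Empirical error of QExp: if the sorted data points `X 1 ≤ ... ≤ X n` in
`[0,1]` have all gaps (including to the boundary points `0` and `1`) at least
`Δ > 0`, then the empirical error `𝔈` of the exponential mechanism for the
quantile of order `p` satisfies
`P(𝔈 ≥ 2(ln(1/Δ) + ln(1/β))/ε) ≤ β` for any `β ∈ (0,1)`. -/
theorem stmt_15 (n : ℕ) (hn : 1 ≤ n) (X : Fin n → ℝ)
    (hX : ∀ i, X i ∈ Set.Icc (0:ℝ) 1)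
    (hmono : ∀ i j : Fin n, i ≤ j → X i ≤ X j)
    (Δ : ℝ) (hΔ : 0 < Δ)
    (hgapLow : ∀ i, Δ ≤ X i)
    (hgapHigh : ∀ i, X i ≤ 1 - Δ)
    (hgap : ∀ i j : Fin n, i ≠ j → Δ ≤ |X i - X j|)
    (p : ℝ) (hp : p ∈ Set.Ioo (0:ℝ) 1) (ε : ℝ) (hε : 0 < ε)
    (u : ℝ → ℝ)
    (hu : ∀ q : ℝ, u q =
      -|((Finset.univ.filter (fun i : Fin n => X i < q)).card : ℝ) - ⌊(n:ℝ) * p⌋|)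
    (μ Q : Measure ℝ)
    (hμ : μ = (volume.restrict (Set.Icc (0:ℝ) 1)).withDensity
      (fun q => ENNReal.ofReal (Real.exp (ε / 2 * u q))))
    (hQ : Q = (μ Set.univ)⁻¹ • μ)
    (β : ℝ) (hβ : β ∈ Set.Ioo (0:ℝ) 1) :
    Q {q : ℝ |
        2 * (Real.log (1/Δ) + Real.log (1/β)) / ε ≤
          |((Finset.univ.filter (fun i : Fin n => X i < q)).card : ℝ) - ⌊(n:ℝ) * p⌋|} ≤
      ENNReal.ofReal β :=
  stmt_15_general n hn X hX hmono Δ hΔ hgapLow hgap p hp ε hε u hu μ Q hμ hQ β hβ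
end
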